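/- arXiv:2308.05321 — 7 statements merged into one kernel-verified Lean document; each statement's English description precedes it below -/
import Mathlib

section
/- Let λ be a partition of n whose jth part is playable and let λ' = R_j(λ). Then the number of nonzero parts of λ' equals λ_j; for every 1 ≤ i < j the ith part of λ' is playable in λ' (i.e. λ'_i ≥ λ_j − 1); and for every i with j ≤ i ≤ λ_j, the ith part of λ' is playable in λ' if and only if λ_j − λ_{i+1} < 3. -/
/-- The number of nonzero parts `ℓ(λ)` of a partition given as a
(1-indexed, weakly decreasing, eventually zero) sequence. -/
noncomputable def plen (lam : ℕ → ℕ) : ℕ := Set.ncard {i : ℕ | 1 ≤ i ∧ lam i ≠ 0}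

/-- The multiset of (nonzero) parts of the partition `λ`. -/
noncomputable def partsM (lam : ℕ → ℕ) : Multiset ℕ :=
  (Finset.Icc 1 (plen lam)).val.map lam

/-- The `j`th part of `λ` is playable if `1 ≤ j ≤ ℓ(λ)` and `λ_j ≥ ℓ(λ) - 1`. -/
noncomputable def Playable (lam : ℕ → ℕ) (j : ℕ) : Prop :=
  1 ≤ j ∧ j ≤ plen lam ∧ plen lam - 1 ≤ lam j

/-- The multiset of parts of `R_j(λ)`: the parts `λ_i + 1` for `1 ≤ i ≤ ℓ(λ)`, `i ≠ j`,
together with `λ_j - (ℓ(λ) - 1)` parts equal to `1`. -/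
noncomputable def Rmove (lam : ℕ → ℕ) (j : ℕ) : Multiset ℕ :=
  (((Finset.Icc 1 (plen lam)).erase j).val.map fun i => lam i + 1)
    + Multiset.replicate (lam j - (plen lam - 1)) 1

/-- Weak decreasingness gives monotonicity. -/
lemma lam_mono (lam : ℕ → ℕ) (hdec : ∀ i, 1 ≤ i → lam (i + 1) ≤ lam i) :
    ∀ a b, 1 ≤ a → a ≤ b → lam b ≤ lam a := by
  intro a b ha hab
  induction b, hab using Nat.le_induction with
  | base => exact le_refl _
  | succ b hb ih => exact le_trans (hdec b (le_trans ha hb)) ih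

/-- Nonzero parts have index at most `plen`. -/
lemma le_plen_of_ne_zero (lam : ℕ → ℕ)
    (hdec : ∀ i, 1 ≤ i → lam (i + 1) ≤ lam i)
    (hfin : ∃ N, ∀ i, N ≤ i → lam i = 0) :
    ∀ k, 1 ≤ k → lam k ≠ 0 → k ≤ plen lam := by
  obtain ⟨N, hN⟩ := hfin
  intro k hk1 hkne
  have hsub : {i : ℕ | 1 ≤ i ∧ lam i ≠ 0} ⊆ Set.Ico 1 N := by
    intro i ⟨hi1, hine⟩
    refine ⟨hi1, ?_⟩
    by_contra h
    exact hine (hN i (le_of_not_gt h))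
  have hfinS : {i : ℕ | 1 ≤ i ∧ lam i ≠ 0}.Finite := (Set.finite_Ico 1 N).subset hsub
  have hsub2 : (Set.Icc 1 k : Set ℕ) ⊆ {i : ℕ | 1 ≤ i ∧ lam i ≠ 0} := by
    intro m ⟨hm1, hmk⟩
    refine ⟨hm1, ?_⟩
    have := lam_mono lam hdec m k hm1 hmk
    omega
  have h1 : (Set.Icc 1 k : Set ℕ).ncard ≤ plen lam :=
    Set.ncard_le_ncard hsub2 hfinS
  have h2 : (Set.Icc 1 k : Set ℕ).ncard = k := by
    rw [← Finset.coe_Icc, Set.ncard_coe_finset, Nat.card_Icc]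
    omega
  omega

/-- Characterization of `lam i ≥ v` via counting parts of size `≥ v`. -/
lemma part_ge_iff (lam : ℕ → ℕ)
    (hdec : ∀ i, 1 ≤ i → lam (i + 1) ≤ lam i)
    (i v : ℕ) (hi1 : 1 ≤ i) (hiL : i ≤ plen lam) :
    v ≤ lam i ↔ i ≤ Multiset.countP (fun x => v ≤ x) (partsM lam) := by
  have hcount : Multiset.countP (fun x => v ≤ x) (partsM lam)
      = (Finset.filter (fun k => v ≤ lam k) (Finset.Icc 1 (plen lam))).card := by
    rw [partsM, Multiset.countP_map, ← Finset.filter_val]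
    rfl
  rw [hcount]
  constructor
  · intro hv
    have hsub : Finset.Icc 1 i ⊆ Finset.filter (fun k => v ≤ lam k) (Finset.Icc 1 (plen lam)) := by
      intro k hk
      rw [Finset.mem_Icc] at hk
      rw [Finset.mem_filter, Finset.mem_Icc]
      exact ⟨⟨hk.1, le_trans hk.2 hiL⟩, le_trans hv (lam_mono lam hdec k i hk.1 hk.2)⟩
    have := Finset.card_le_card hsub
    rw [Nat.card_Icc] at this
    omega
  · intro hc
    by_contra hv
    push_neg at hv
    have hsub : Finset.filter (fun k => v ≤ lam k) (Finset.Icc 1 (plen lam))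
        ⊆ Finset.Ico 1 i := by
      intro k hk
      rw [Finset.mem_filter, Finset.mem_Icc] at hk
      rw [Finset.mem_Ico]
      refine ⟨hk.1.1, ?_⟩
      by_contra h
      push_neg at h
      have := lam_mono lam hdec i k hi1 h
      omega
    have := Finset.card_le_card hsub
    rw [Nat.card_Ico] at this
    omega

/-- Lemma on the length and playable parts of `R_j(λ)`:
`ℓ(R_j(λ)) = λ_j`; every part strictly before `j` is playable in `R_j(λ)`;
and for `j ≤ i ≤ λ_j`, the `i`th part of `R_j(λ)` is playable iff `λ_j - λ_{i+1} < 3`. -/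
theorem stmt4 (n : ℕ) (lam lam' : ℕ → ℕ) (j : ℕ)
    (hdec : ∀ i, 1 ≤ i → lam (i + 1) ≤ lam i)
    (hfin : ∃ N, ∀ i, N ≤ i → lam i = 0)
    (hsum : (partsM lam).sum = n)
    (hplay : Playable lam j)
    (hdec' : ∀ i, 1 ≤ i → lam' (i + 1) ≤ lam' i)
    (hfin' : ∃ N, ∀ i, N ≤ i → lam' i = 0)
    (hR : partsM lam' = Rmove lam j) :
    plen lam' = lam j ∧
    (∀ i, 1 ≤ i → i < j → Playable lam' i) ∧
    (∀ i, j ≤ i → i ≤ lam j → (Playable lam' i ↔ lam j - lam (i + 1) < 3)) := by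
  obtain ⟨hj1, hjL, hLj⟩ := hplay
  set L := plen lam with hL
  have hjmem : j ∈ Finset.Icc 1 L := Finset.mem_Icc.2 ⟨hj1, hjL⟩
  -- cardinality computations
  have hcard1 : Multiset.card (partsM lam') = plen lam' := by
    rw [partsM, Multiset.card_map, Finset.card_val, Nat.card_Icc]
    omega
  have hcard2 : Multiset.card (Rmove lam j) = lam j := by
    rw [Rmove, Multiset.card_add, Multiset.card_map, Multiset.card_replicate,
      Finset.card_val, Finset.card_erase_of_mem hjmem, Nat.card_Icc]
    omega
  have hlen : plen lam' = lam j := by rw [← hcard1, hR, hcard2]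
  -- countP computation for Rmove
  have hcR : ∀ v : ℕ, 2 ≤ v → Multiset.countP (fun x => v ≤ x) (Rmove lam j)
      = (Finset.filter (fun k => v ≤ lam k + 1) ((Finset.Icc 1 L).erase j)).card := by
    intro v hv
    rw [Rmove, Multiset.countP_add, Multiset.countP_map, ← Finset.filter_val]
    have hz : Multiset.countP (fun x => v ≤ x) (Multiset.replicate (lam j - (L - 1)) 1) = 0 := by
      rw [Multiset.countP_eq_zero]
      intro a ha
      rw [Multiset.eq_of_mem_replicate ha]
      omega
    rw [hz]
    rfl
  refine ⟨hlen, ?_, ?_⟩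
  · -- parts before j are playable
    intro i hi1 hij
    have hiL' : i ≤ plen lam' := by omega
    refine ⟨hi1, hiL', ?_⟩
    rw [hlen]
    rw [part_ge_iff lam' hdec' i (lam j - 1) hi1 (by omega), hR]
    have hlow : (Finset.filter (fun k => lam j - 1 ≤ lam k + 1) ((Finset.Icc 1 L).erase j)).card
        ≤ Multiset.countP (fun x => lam j - 1 ≤ x) (Rmove lam j) := by
      rw [Rmove, Multiset.countP_add, Multiset.countP_map, ← Finset.filter_val]
      exact Nat.le_add_right _ _
    have hsub : Finset.Icc 1 i ⊆
        Finset.filter (fun k => lam j - 1 ≤ lam k + 1) ((Finset.Icc 1 L).erase j) := by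
      intro k hk
      rw [Finset.mem_Icc] at hk
      rw [Finset.mem_filter, Finset.mem_erase, Finset.mem_Icc]
      have hkj : lam j ≤ lam k := lam_mono lam hdec k j hk.1 (by omega)
      exact ⟨⟨by omega, hk.1, by omega⟩, by omega⟩
    have := Finset.card_le_card hsub
    rw [Nat.card_Icc] at this
    omega
  · -- parts from j to lam j
    intro i hji hiLam
    have hi1 : 1 ≤ i := le_trans hj1 hji
    have hiff : Playable lam' i ↔ lam j - 1 ≤ lam' i := by
      constructor
      · intro ⟨_, _, h⟩; rw [hlen] at h; exact h
      · intro h; exact ⟨hi1, by omega, by rw [hlen]; exact h⟩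
    rw [hiff, part_ge_iff lam' hdec' i (lam j - 1) hi1 (by omega), hR]
    rcases Nat.lt_or_ge (lam j) 3 with hsm | hbg
    · -- small case: everything playable
      constructor
      · intro _; omega
      · intro _
        have hall : Multiset.countP (fun x => lam j - 1 ≤ x) (Rmove lam j)
            = Multiset.card (Rmove lam j) := by
          rw [Multiset.countP_eq_card]
          intro a ha
          rw [Rmove, Multiset.mem_add] at ha
          rcases ha with ha | ha
          · obtain ⟨b, _, rfl⟩ := Multiset.mem_map.1 ha
            omega
          · rw [Multiset.eq_of_mem_replicate ha]
            omega
        rw [hall, hcard2]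
        exact hiLam
    · -- big case: lam j ≥ 3
      rw [hcR (lam j - 1) (by omega)]
      constructor
      · -- i ≤ count → lam j - lam (i+1) < 3
        intro hc
        by_contra hcon
        push_neg at hcon
        have hsub : Finset.filter (fun k => lam j - 1 ≤ lam k + 1) ((Finset.Icc 1 L).erase j)
            ⊆ (Finset.Icc 1 i).erase j := by
          intro k hk
          rw [Finset.mem_filter, Finset.mem_erase, Finset.mem_Icc] at hk
          rw [Finset.mem_erase, Finset.mem_Icc]
          refine ⟨hk.1.1, hk.1.2.1, ?_⟩
          by_contra h
          push_neg at h
          have : lam k ≤ lam (i + 1) := lam_mono lam hdec (i + 1) k (by omega) h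
          omega
        have hjmem2 : j ∈ Finset.Icc 1 i := Finset.mem_Icc.2 ⟨hj1, hji⟩
        have := Finset.card_le_card hsub
        rw [Finset.card_erase_of_mem hjmem2, Nat.card_Icc] at this
        omega
      · -- lam j - lam (i+1) < 3 → i ≤ count
        intro hcon
        have hne : lam (i + 1) ≠ 0 := by omega
        have hi1L : i + 1 ≤ L := le_plen_of_ne_zero lam hdec hfin (i + 1) (by omega) hne
        have hsub : (Finset.Icc 1 (i + 1)).erase j ⊆
            Finset.filter (fun k => lam j - 1 ≤ lam k + 1) ((Finset.Icc 1 L).erase j) := by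
          intro k hk
          rw [Finset.mem_erase, Finset.mem_Icc] at hk
          rw [Finset.mem_filter, Finset.mem_erase, Finset.mem_Icc]
          have : lam (i + 1) ≤ lam k := lam_mono lam hdec k (i + 1) hk.2.1 hk.2.2
          exact ⟨⟨hk.1, hk.2.1, by omega⟩, by omega⟩
        have hjmem3 : j ∈ Finset.Icc 1 (i + 1) := Finset.mem_Icc.2 ⟨hj1, by omega⟩
        have := Finset.card_le_card hsub
        rw [Finset.card_erase_of_mem hjmem3, Nat.card_Icc] at this
        omega
end

section
/- Fix n ≥ 1 and let Φ be the map sending a function b : ℤ/nℤ → {B,W} to the function Φ(b) : ℤ/nℤ → ℕ with Φ(b)(i) = 2 if b(i) = B and b(i+1) = W, Φ(b)(i) = 0 if b(i) = W and b(i+1) = B, and Φ(b)(i) = 1 otherwise. Call a : ℤ/nℤ → ℕ a cyclically alternating tail if all its values are at most 2 and: whenever a(i) = 2 and a(i+d) = 2 with 1 ≤ d ≤ n, there exists e with 1 ≤ e < d and a(i+e) = 0; and likewise with the roles of 0 and 2 interchanged. Then Φ restricts to a bijection from the set of non-constant functions b : ℤ/nℤ → {B,W} onto the set of cyclically alternating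 tails a : ℤ/nℤ → ℕ having at least one value equal to 2. -/
/-- The map `Φ` sending a two-colored necklace `b : ℤ/nℤ → {B,W}` (`true` = B,
`false` = W) to its associated tail: `2` where `b` goes `B` to `W`, `0` where it goes
`W` to `B`, and `1` otherwise. -/
def Phi (n : ℕ) (b : ZMod n → Bool) : ZMod n → ℕ := fun i =>
  if b i = true ∧ b (i + 1) = false then 2
  else if b i = false ∧ b (i + 1) = true then 0
  else 1

/-- `a : ℤ/nℤ → ℕ` is a cyclically alternating tail: all values are at most `2`, and
between any two (cyclic) occurrences of `2` there is a `0`, and vice versa. -/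
def CycAltTail (n : ℕ) (a : ZMod n → ℕ) : Prop :=
  (∀ i, a i ≤ 2) ∧
  (∀ (i : ZMod n) (d : ℕ), 1 ≤ d → d ≤ n → a i = 2 → a (i + d) = 2 →
    ∃ e : ℕ, 1 ≤ e ∧ e < d ∧ a (i + e) = 0) ∧
  (∀ (i : ZMod n) (d : ℕ), 1 ≤ d → d ≤ n → a i = 0 → a (i + d) = 0 →
    ∃ e : ℕ, 1 ≤ e ∧ e < d ∧ a (i + e) = 2)


lemma phi_eq_two {n : ℕ} {b : ZMod n → Bool} {i : ZMod n} (h : Phi n b i = 2) :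
    b i = true ∧ b (i + 1) = false := by
  unfold Phi at h
  split at h
  · assumption
  · split at h <;> simp_all

lemma phi_eq_zero {n : ℕ} {b : ZMod n → Bool} {i : ZMod n} (h : Phi n b i = 0) :
    b i = false ∧ b (i + 1) = true := by
  unfold Phi at h
  split at h
  · simp_all
  · split at h
    · assumption
    · simp_all

lemma phi_two_of {n : ℕ} {b : ZMod n → Bool} {i : ZMod n}
    (h1 : b i = true) (h2 : b (i + 1) = false) : Phi n b i = 2 := by
  unfold Phi; simp [h1, h2]

lemma phi_zero_of {n : ℕ} {b : ZMod n → Bool} {i : ZMod n}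
    (h1 : b i = false) (h2 : b (i + 1) = true) : Phi n b i = 0 := by
  unfold Phi; simp [h1, h2]

lemma flipAux (f : ℕ → Bool) (x : Bool) (m : ℕ) (h0 : f 0 = x) (hm : f m ≠ x) :
    ∃ k < m, f k = x ∧ f (k + 1) ≠ x := by
  induction m with
  | zero => exact absurd h0 hm
  | succ m ih =>
    by_cases h : f m = x
    · exact ⟨m, Nat.lt_succ_self m, h, hm⟩
    · obtain ⟨k, hk, h1, h2⟩ := ih h
      exact ⟨k, hk.trans (Nat.lt_succ_self m), h1, h2⟩

lemma castc {n : ℕ} (j : ZMod n) (k : ℕ) :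
    j + ((k + 1 : ℕ) : ZMod n) = (j + 1) + (k : ℕ) := by push_cast; ring

lemma exists_tf {n : ℕ} [NeZero n] {b : ZMod n → Bool} (h : ∃ i j, b i ≠ b j) :
    ∃ i, b i = true ∧ b (i + 1) = false := by
  obtain ⟨i, j, hij⟩ := h
  obtain ⟨p, q, hp, hq⟩ : ∃ p q, b p = true ∧ b q = false := by
    cases hbi : b i
    · cases hbj : b j
      · simp [hbi, hbj] at hij
      · exact ⟨j, i, hbj, hbi⟩
    · cases hbj : b j
      · exact ⟨i, j, hbi, hbj⟩
      · simp [hbi, hbj] at hij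
  obtain ⟨m, hm⟩ : ∃ m : ℕ, (m : ZMod n) = q - p := ⟨(q - p).val, ZMod.natCast_rightInverse _⟩
  have hqm : q = p + (m : ℕ) := by rw [hm]; ring
  obtain ⟨k, _, h1, h2⟩ := flipAux (fun k => b (p + (k : ℕ))) true m (by simpa using hp)
    (by show b (p + (m : ℕ)) ≠ true; rw [← hqm]; simp [hq])
  refine ⟨p + (k : ℕ), h1, ?_⟩
  have : b (p + ((k + 1 : ℕ) : ZMod n)) = false := by
    simpa using Bool.not_eq_true _ |>.mp h2
  rwa [show p + ((k + 1 : ℕ) : ZMod n) = p + (k : ℕ) + 1 by push_cast; ring] at this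

lemma inj_step {n : ℕ} {b b' : ZMod n → Bool} {j : ZMod n}
    (he : Phi n b j = Phi n b' j) (h : b j = b' j) : b (j + 1) = b' (j + 1) := by
  unfold Phi at he
  cases hb : b j <;> cases h1 : b (j + 1) <;> cases h2 : b' (j + 1) <;> simp_all


/-- `Φ` restricts to a bijection from the non-constant words `b : ℤ/nℤ → {B,W}` onto
the cyclically alternating tails having at least one value equal to `2`. -/
theorem stmt6 (n : ℕ) (hn : 1 ≤ n) :
    Set.BijOn (Phi n) {b : ZMod n → Bool | ∃ i j, b i ≠ b j}
      {a : ZMod n → ℕ | CycAltTail n a ∧ ∃ i, a i = 2} := by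
  have : NeZero n := ⟨by omega⟩
  refine ⟨?_, ?_, ?_⟩
  · -- MapsTo
    intro b hb
    obtain ⟨i0, hi0t, hi0f⟩ := exists_tf hb
    refine ⟨⟨fun i => ?_, fun i d hd1 hdn h2 h2' => ?_, fun i d hd1 hdn h0 h0' => ?_⟩,
      i0, phi_two_of hi0t hi0f⟩
    · unfold Phi; split; · omega
      split <;> omega
    · obtain ⟨hbi, hbi1⟩ := phi_eq_two h2
      obtain ⟨hbd, -⟩ := phi_eq_two h2'
      rcases Nat.eq_or_lt_of_le hd1 with rfl | hd2
      · rw [show i + ((1:ℕ) : ZMod n) = i + 1 by push_cast; ring] at hbd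
        simp [hbi1] at hbd
      · obtain ⟨k, hk, h1, h2⟩ := flipAux (fun k => b (i + 1 + (k : ℕ))) false (d - 1)
          (by simpa using hbi1)
          (by
            show b (i + 1 + ((d - 1 : ℕ) : ZMod n)) ≠ false
            rw [show i + 1 + ((d - 1 : ℕ) : ZMod n) = i + (d : ℕ) by
              rw [Nat.cast_sub hd1]; push_cast; ring]
            simp [hbd])
        refine ⟨k + 1, by omega, by omega, ?_⟩
        rw [castc]
        refine phi_zero_of h1 ?_
        have := Bool.not_eq_false _ |>.mp h2
        rwa [show i + 1 + ((k + 1 : ℕ) : ZMod n) = i + 1 + (k : ℕ) + 1 by push_cast; ring] at this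
    · obtain ⟨hbi, hbi1⟩ := phi_eq_zero h0
      obtain ⟨hbd, -⟩ := phi_eq_zero h0'
      rcases Nat.eq_or_lt_of_le hd1 with rfl | hd2
      · rw [show i + ((1:ℕ) : ZMod n) = i + 1 by push_cast; ring] at hbd
        simp [hbi1] at hbd
      · obtain ⟨k, hk, h1, h2⟩ := flipAux (fun k => b (i + 1 + (k : ℕ))) true (d - 1)
          (by simpa using hbi1)
          (by
            show b (i + 1 + ((d - 1 : ℕ) : ZMod n)) ≠ true
            rw [show i + 1 + ((d - 1 : ℕ) : ZMod n) = i + (d : ℕ) by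
              rw [Nat.cast_sub hd1]; push_cast; ring]
            simp [hbd])
        refine ⟨k + 1, by omega, by omega, ?_⟩
        rw [castc]
        refine phi_two_of h1 ?_
        have := Bool.not_eq_true _ |>.mp h2
        rwa [show i + 1 + ((k + 1 : ℕ) : ZMod n) = i + 1 + (k : ℕ) + 1 by push_cast; ring] at this
  · -- InjOn
    intro b hb b' hb' he
    obtain ⟨i0, hi0t, hi0f⟩ := exists_tf hb
    have h2' : Phi n b' i0 = 2 := by rw [← congrFun he i0]; exact phi_two_of hi0t hi0f
    have base : b i0 = b' i0 := by rw [hi0t, (phi_eq_two h2').1]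
    have key : ∀ k : ℕ, b (i0 + (k : ℕ)) = b' (i0 + (k : ℕ)) := by
      intro k
      induction k with
      | zero => simpa using base
      | succ k ih =>
        have := inj_step (congrFun he (i0 + (k : ℕ))) ih
        rwa [show i0 + ((k + 1 : ℕ) : ZMod n) = i0 + (k : ℕ) + 1 by push_cast; ring]
    funext j
    obtain ⟨m, hm⟩ : ∃ m : ℕ, (m : ZMod n) = j - i0 := ⟨(j - i0).val, ZMod.natCast_rightInverse _⟩
    have : j = i0 + (m : ℕ) := by rw [hm]; ring
    rw [this]; exact key m
  · -- SurjOn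
    rintro a ⟨⟨hle, h20, h02⟩, i0, hi0⟩
    have hex : ∀ j : ZMod n, ∃ k : ℕ, a (j + (k : ℕ)) ≠ 1 := by
      intro j
      refine ⟨(i0 - j).val, ?_⟩
      rw [show j + (((i0 - j).val : ℕ) : ZMod n) = i0 by
        rw [ZMod.natCast_rightInverse (i0 - j)]; ring]
      omega
    set b : ZMod n → Bool := fun j => decide (a (j + ((Nat.find (hex j) : ℕ) : ZMod n)) = 2)
      with hbdef
    have hb_of : ∀ j : ZMod n, a j ≠ 1 → b j = decide (a j = 2) := by
      intro j h
      have h0 : Nat.find (hex j) = 0 := Nat.find_eq_zero _ |>.mpr (by simpa using h)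
      rw [hbdef]; simp only [h0, Nat.cast_zero, add_zero]
    have hstep : ∀ j : ZMod n, a j = 1 → b j = b (j + 1) := by
      intro j h
      have hk0 : Nat.find (hex j) ≠ 0 := by
        intro h0
        have := Nat.find_spec (hex j)
        rw [h0] at this; simp [h] at this
      obtain ⟨k', hk'⟩ := Nat.exists_eq_succ_of_ne_zero hk0
      have hspec : a (j + ((k' + 1 : ℕ) : ZMod n)) ≠ 1 := by
        have := Nat.find_spec (hex j); rwa [hk'] at this
      rw [castc] at hspec
      have hfind : Nat.find (hex (j + 1)) = k' := by
        refine le_antisymm (Nat.find_min' (hex (j + 1)) hspec) ?_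
        by_contra hlt
        push_neg at hlt
        have hsp := Nat.find_spec (hex (j + 1))
        have : a (j + ((Nat.find (hex (j + 1)) + 1 : ℕ) : ZMod n)) ≠ 1 := by
          rw [castc]; exact hsp
        exact Nat.find_min (hex j) (by omega) this
      rw [hbdef]
      simp only [hk', hfind, castc]
    have hbound : ∀ j : ZMod n, a j ≠ 1 → Nat.find (hex (j + 1)) + 1 ≤ n := by
      intro j h
      have : a (j + 1 + ((n - 1 : ℕ) : ZMod n)) ≠ 1 := by
        rw [show j + 1 + ((n - 1 : ℕ) : ZMod n) = j by
          rw [Nat.cast_sub hn, Nat.cast_one, ZMod.natCast_self]; ring]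
        exact h
      have := Nat.find_min' (hex (j + 1)) this
      omega
    have hnext2 : ∀ j : ZMod n, a j = 2 →
        a (j + 1 + ((Nat.find (hex (j + 1)) : ℕ) : ZMod n)) = 0 := by
      intro j h
      set k := Nat.find (hex (j + 1)) with hkdef
      have hsp : a (j + 1 + (k : ℕ)) ≠ 1 := Nat.find_spec (hex (j + 1))
      have hle' : a (j + 1 + (k : ℕ)) ≤ 2 := hle _
      by_contra hne
      have h2 : a (j + 1 + (k : ℕ)) = 2 := by omega
      rw [← castc] at h2
      obtain ⟨e, he1, he2, he0⟩ := h20 j (k + 1) (by omega)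
        (hbound j (by omega)) h h2
      obtain ⟨e', rfl⟩ := Nat.exists_eq_succ_of_ne_zero (by omega : e ≠ 0)
      rw [castc] at he0
      have hmin := Nat.find_min (hex (j + 1)) (m := e') (by omega)
      simp only [ne_eq, not_not] at hmin
      omega
    have hnext0 : ∀ j : ZMod n, a j = 0 →
        a (j + 1 + ((Nat.find (hex (j + 1)) : ℕ) : ZMod n)) = 2 := by
      intro j h
      set k := Nat.find (hex (j + 1)) with hkdef
      have hsp : a (j + 1 + (k : ℕ)) ≠ 1 := Nat.find_spec (hex (j + 1))
      have hle' : a (j + 1 + (k : ℕ)) ≤ 2 := hle _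
      by_contra hne
      have h2 : a (j + 1 + (k : ℕ)) = 0 := by omega
      rw [← castc] at h2
      obtain ⟨e, he1, he2, he0⟩ := h02 j (k + 1) (by omega)
        (hbound j (by omega)) h h2
      obtain ⟨e', rfl⟩ := Nat.exists_eq_succ_of_ne_zero (by omega : e ≠ 0)
      rw [castc] at he0
      have hmin := Nat.find_min (hex (j + 1)) (m := e') (by omega)
      simp only [ne_eq, not_not] at hmin
      omega
    have hb2 : ∀ j : ZMod n, a j = 2 → b j = true ∧ b (j + 1) = false := by
      intro j h
      constructor
      · rw [hb_of j (by omega)]; simp [h]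
      · rw [hbdef]; simp only [decide_eq_false_iff_not]
        rw [hnext2 j h]; omega
    have hb0 : ∀ j : ZMod n, a j = 0 → b j = false ∧ b (j + 1) = true := by
      intro j h
      constructor
      · rw [hb_of j (by omega)]; simp [h]
      · rw [hbdef]; simp only [decide_eq_true_eq]
        rw [hnext0 j h]
    refine ⟨b, ⟨i0, i0 + 1, ?_⟩, ?_⟩
    · obtain ⟨h1, h2⟩ := hb2 i0 hi0
      rw [h1, h2]; simp
    · funext i
      have h := hle i
      rcases (show a i = 0 ∨ a i = 1 ∨ a i = 2 by omega) with h | h | h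
      · obtain ⟨h1, h2⟩ := hb0 i h
        rw [phi_zero_of h1 h2, h]
      · have heq := hstep i h
        unfold Phi
        rw [h]
        cases hbi : b i <;> rw [hbi] at heq <;> simp [← heq]
      · obtain ⟨h1, h2⟩ := hb2 i h
        rw [phi_two_of h1 h2, h]
end

section
/- For every natural number i, the following identity holds in the ring of formal power series ℤ⟦X⟧: (1 − 2X)^{i+1} · (Σ_{n≥0} c(n,i) X^n) = (1 − X)^{i+1}. (Equivalently, Σ_{n≥0} c(n,i) x^n = ((1−x)/(1−2x))^{i+1}.) -/
/-- `c(n,i)`: the number of weak compositions of `n` (finite lists of nonnegative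
integers summing to `n`) with exactly `i` entries equal to `0`. -/
noncomputable def wc (n i : ℕ) : ℕ :=
  Set.ncard {l : List ℕ | l.sum = n ∧ l.count 0 = i}

/-!
Split a weak composition of `n` with `i` zeros after its first entry. Those whose first entry
is `n - m > 0` correspond to the compositions of `m < n` with `i` zeros; the others (first entry
`0`, or the empty list, whose `headI` is also `0`) are the compositions of `n` with `i - 1` zeros
if `i > 0`, and just `[]` for `n = 0` if `i = 0`. A recurrence `f n = g n + Σ_{m<n} f m` reads
`(1 - 2X) F = (1 - X) G` on generating functions, so `(1 - 2X) A₀ = 1 - X` and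
`(1 - 2X) A_{i+1} = (1 - X) A_i`; the theorem follows by induction on `i`.
-/

open Finset hiding mk
open PowerSeries

theorem PowerSeries.one_sub_two_mul_X_mul_mk_of_eq_add_sum {R : Type*} [CommRing R]
    {f g : ℕ → R} (h : ∀ n, f n = g n + ∑ m ∈ range n, f m) :
    (1 - 2 * X) * mk f = (1 - X) * mk g := by
  rw [show (1 - 2 * X) * mk f = mk f - X * mk f - X * mk f by ring, sub_mul, one_mul]
  ext (_ | n)
  · simpa using h 0
  · simp only [map_sub, coeff_succ_X_mul, coeff_mk]
    have hsucc := h (n + 1)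
    rw [sum_range_succ] at hsucc
    linear_combination hsucc - h n

lemma List.length_le_count_zero_add_sum (l : List ℕ) : l.length ≤ l.count 0 + l.sum := by
  induction l with
  | nil => simp
  | cons a t ih =>
    rcases eq_or_ne a 0 with rfl | ha
    · simp; omega
    · simp [ha]; omega

lemma finite_setOf_sum_eq_and_count_zero_eq (n i : ℕ) :
    {l : List ℕ | l.sum = n ∧ l.count 0 = i}.Finite := by
  refine ((List.finite_length_le (Fin (n + 1)) (n + i)).image (List.map Fin.val)).subset ?_
  -- the entries are at most `n`, and there are at most `n + i` of them
  rintro l ⟨hsum, hcount⟩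
  refine ⟨l.map fun x => (⟨min x n, by omega⟩ : Fin (n + 1)), ?_, ?_⟩
  · have := l.length_le_count_zero_add_sum
    simp only [Set.mem_ofPred_eq, List.length_map]
    omega
  · rw [List.map_map]
    refine (List.map_congr_left fun x hx => ?_).trans l.map_id
    simp [Nat.min_eq_left (hsum ▸ List.le_sum_of_mem hx)]

noncomputable def weakCompositions (n i : ℕ) : Finset (List ℕ) :=
  (finite_setOf_sum_eq_and_count_zero_eq n i).toFinset

@[simp]
lemma mem_weakCompositions {n i : ℕ} {l : List ℕ} :
    l ∈ weakCompositions n i ↔ l.sum = n ∧ l.count 0 = i := by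
  simp [weakCompositions]

lemma wc_eq_card_weakCompositions (n i : ℕ) : wc n i = #(weakCompositions n i) :=
  Set.ncard_eq_toFinset_card _ _

lemma card_weakCompositions_filter_headI_ne_zero (n i : ℕ) :
    #{l ∈ weakCompositions n i | l.headI ≠ 0} = ∑ m ∈ range n, wc m i := by
  simp only [wc_eq_card_weakCompositions, ← card_sigma]
  refine card_nbij' (fun l => ⟨n - l.headI, l.tail⟩) (fun p => (n - p.1) :: p.2)
    ?_ ?_ ?_ ?_
  · rintro (_ | ⟨_ | a, t⟩) hl <;> simp at hl ⊢
    omega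
  · rintro ⟨m, t⟩ hp
    simp only [coe_sigma, Set.mem_sigma_iff, coe_range, Set.mem_Iio, mem_coe,
      mem_weakCompositions] at hp
    simp [Nat.sub_ne_zero_of_lt hp.1]
    omega
  · rintro (_ | ⟨_ | a, t⟩) hl <;> simp at hl ⊢
    omega
  · rintro ⟨m, t⟩ hp
    simp only [coe_sigma, Set.mem_sigma_iff, coe_range, Set.mem_Iio] at hp
    simp
    omega

lemma weakCompositions_zero_filter_headI_eq_zero (n : ℕ) :
    {l ∈ weakCompositions n 0 | l.headI = 0} = if n = 0 then {[]} else ∅ := by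
  ext (_ | ⟨_ | a, t⟩) <;> split_ifs <;> simp_all; omega

lemma card_weakCompositions_succ_filter_headI_eq_zero (n i : ℕ) :
    #{l ∈ weakCompositions n (i + 1) | l.headI = 0} = wc n i := by
  rw [wc_eq_card_weakCompositions]
  refine card_nbij' List.tail (List.cons 0) ?_ ?_ ?_ (fun _ _ => rfl)
  · rintro (_ | ⟨_ | a, t⟩) hl <;> simp_all
  · intro t ht
    simp_all
  · rintro (_ | ⟨_ | a, t⟩) hl <;> simp_all

lemma wc_eq_card_filter_headI_eq_zero_add_sum (n i : ℕ) :
    wc n i = #{l ∈ weakCompositions n i | l.headI = 0} + ∑ m ∈ range n, wc m i := by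
  rw [← card_weakCompositions_filter_headI_ne_zero, card_filter_add_card_filter_not,
    wc_eq_card_weakCompositions]

lemma one_sub_two_mul_X_mul_mk_wc_zero :
    (1 - 2 * X : ℤ⟦X⟧) * mk (fun n => (wc n 0 : ℤ)) = 1 - X := by
  have h := one_sub_two_mul_X_mul_mk_of_eq_add_sum (f := fun n => (wc n 0 : ℤ))
    (g := fun n => if n = 0 then 1 else 0) fun n => by
      rw [wc_eq_card_filter_headI_eq_zero_add_sum, weakCompositions_zero_filter_headI_eq_zero]
      split_ifs <;> simp
  rwa [show mk (fun n => if n = 0 then (1 : ℤ) else 0) = 1 by ext; simp [coeff_one], mul_one] at h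

lemma one_sub_two_mul_X_mul_mk_wc_succ (i : ℕ) :
    (1 - 2 * X : ℤ⟦X⟧) * mk (fun n => (wc n (i + 1) : ℤ)) =
      (1 - X) * mk (fun n => (wc n i : ℤ)) :=
  one_sub_two_mul_X_mul_mk_of_eq_add_sum fun n => by
    rw [wc_eq_card_filter_headI_eq_zero_add_sum, card_weakCompositions_succ_filter_headI_eq_zero]
    push_cast
    rfl

/-- The generating function identity `Σ_{n≥0} c(n,i) x^n = ((1-x)/(1-2x))^{i+1}`,
stated in `ℤ⟦X⟧` as `(1-2X)^{i+1} · Σ_n c(n,i) X^n = (1-X)^{i+1}`. -/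
theorem stmt7 (i : ℕ) :
    ((1 - 2 * PowerSeries.X : PowerSeries ℤ)) ^ (i + 1) *
        PowerSeries.mk (fun n => (wc n i : ℤ)) =
      (1 - PowerSeries.X : PowerSeries ℤ) ^ (i + 1) := by
  induction i with
  | zero => simpa using one_sub_two_mul_X_mul_mk_wc_zero
  | succ i ih =>
    calc (1 - 2 * X : ℤ⟦X⟧) ^ (i + 2) * mk (fun n => (wc n (i + 1) : ℤ))
        = (1 - 2 * X) ^ (i + 1) * ((1 - 2 * X) * mk (fun n => (wc n (i + 1) : ℤ))) := by ring
      _ = (1 - X) * ((1 - 2 * X) ^ (i + 1) * mk (fun n => (wc n i : ℤ))) := by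
        rw [one_sub_two_mul_X_mul_mk_wc_succ]; ring
      _ = (1 - X) ^ (i + 2) := by rw [ih]; ring
end

section
/- Let k ≥ 1, let (f_1,…,f_k) be a k-fuse prefix, and let t = (ν, T) be any barred state. Define the barred state s = (μ, S) by μ_i = f_i for 1 ≤ i ≤ k, μ_{k+i} = ν_i for i ≥ 1, and S = {1,…,k} ∪ {k+i : i ∈ T}. Then for every finite sequence (i_1,…,i_m) of positive integers: (i_1,…,i_m) is playable from t if and only if (k+i_1,…,k+i_m) is playable from s. Moreover, in that case, writing (ν', T') for the state obtained from t by playing (i_1,…,i_m) and (μ', S') for the state obtained from s by playing (k+i_1,…,k+i_m), one has μ'_i = f_i for 1 ≤ i ≤ k−1, μ'_k ≥ f_k (so that (μ'_1,…,μ'_k) is again a k-fuse prefix), μ'_{k+i} = ν'_i for all i ≥ 1, and S' = {1,…,k} ∪ {k+i : i ∈ T'}. -/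
/-!
Moves at positions `k + j` with `j ≥ 1` leave `μ_1, …, μ_{k-1}` untouched and can only enlarge
`μ_k` (by merging `μ_{k+1}` into it), while the bars they create beyond position `k` depend only on
entries from position `k + j` on, i.e. on the shifted copy of `t`. So the part of the state after
position `k` evolves exactly as `t` does. Positions `1, …, k` stay barred: each carries a nonzero
entry, and a move at `k + j` bars every earlier position with a nonzero entry.
-/

/-- A barred state: a sequence `μ` of natural numbers indexed by the positive
integers (the value at `0` is irrelevant) together with a set `S` of barred
positions, all positive and with `μ_j ≠ 0` for `j ∈ S`. -/
structure BarredState where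
  mu : ℕ → ℕ
  bars : Set ℕ
  bars_pos : ∀ j ∈ bars, 1 ≤ j
  bars_ne : ∀ j ∈ bars, mu j ≠ 0

/-- The sequence obtained from `μ` by the move `R_j`:
`μ'_i = μ_i` for `i < j-1`, `μ'_{j-1} = μ_{j-1} + μ_j`, and `μ'_i = μ_{i+1}` for `i ≥ j`. -/
def moveMu (mu : ℕ → ℕ) (j : ℕ) : ℕ → ℕ := fun i =>
  if i < j - 1 then mu i
  else if i = j - 1 then mu (j - 1) + mu j
  else mu (i + 1)

/-- The move `R_j` on barred states: the new barred set is
`{i : 1 ≤ i ≤ j-1, μ'_i ≠ 0} ∪ {i ≥ j : μ'_i ≠ 0 and μ_j + ⋯ + μ_i < 3}`. -/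
def BarredState.move (s : BarredState) (j : ℕ) : BarredState where
  mu := moveMu s.mu j
  bars :=
    {i | 1 ≤ i ∧ i ≤ j - 1 ∧ moveMu s.mu j i ≠ 0} ∪
    {i | 1 ≤ i ∧ j ≤ i ∧ moveMu s.mu j i ≠ 0 ∧ (∑ t ∈ Finset.Icc j i, s.mu t) < 3}
  bars_pos := by
    rintro i (⟨h, -, -⟩ | ⟨h, -, -, -⟩) <;> exact h
  bars_ne := by
    rintro i (⟨-, -, h⟩ | ⟨-, -, h, -⟩) <;> exact h

/-- A finite sequence `(j_1, …, j_m)` is playable from `s` if `j_1` is barred in `s`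
and `(j_2, …, j_m)` is playable from `R_{j_1}(s)`. -/
def PlayableSeq : BarredState → List ℕ → Prop
  | _, [] => True
  | s, j :: js => j ∈ s.bars ∧ PlayableSeq (s.move j) js

/-- The state obtained by playing a sequence of moves. -/
def playAll : BarredState → List ℕ → BarredState
  | s, [] => s
  | s, j :: js => playAll (s.move j) js

/-- `(f_1, …, f_k)` is a `k`-fuse prefix: `f_i ∈ {1,2}` for `1 ≤ i ≤ k-1`, `f_k ≥ 3`,
and no two consecutive entries equal `1`. -/
def IsFusePrefix (k : ℕ) (f : ℕ → ℕ) : Prop :=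
  (∀ i, 1 ≤ i → i ≤ k - 1 → f i = 1 ∨ f i = 2) ∧
  3 ≤ f k ∧
  (∀ i, 1 ≤ i → i ≤ k - 1 → ¬(f i = 1 ∧ f (i + 1) = 1))

/-- A barred state has a `k`-fuse if `(μ_1, …, μ_k)` is a `k`-fuse prefix and
positions `1, …, k` are all barred. -/
def HasFuse (k : ℕ) (s : BarredState) : Prop :=
  IsFusePrefix k s.mu ∧ ∀ i, 1 ≤ i → i ≤ k → i ∈ s.bars

lemma moveMu_of_lt {mu : ℕ → ℕ} {i j : ℕ} (h : i < j - 1) : moveMu mu j i = mu i := by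
  simp [moveMu, h]

lemma le_moveMu_of_lt {mu : ℕ → ℕ} {i j : ℕ} (h : i < j) : mu i ≤ moveMu mu j i := by
  unfold moveMu
  split_ifs with h₁ h₂
  · exact le_rfl
  · subst h₂; exact Nat.le_add_right _ _
  · omega

lemma moveMu_add_add {mu nu : ℕ → ℕ} {k i j : ℕ} (hmu : ∀ i, 1 ≤ i → mu (k + i) = nu i)
    (hj : 1 ≤ j) (hi : 1 ≤ i) : moveMu mu (k + j) (k + i) = moveMu nu j i := by
  unfold moveMu
  rcases lt_trichotomy i (j - 1) with h | rfl | h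
  · rw [if_pos (by omega), if_pos h, hmu i hi]
  · rw [if_neg (by omega), if_pos (by omega), if_neg (by omega), if_pos rfl,
      show k + j - 1 = k + (j - 1) by omega, hmu _ hi, hmu j hj]
  · rw [if_neg (by omega), if_neg (by omega), if_neg (by omega), if_neg (by omega)]
    exact hmu (i + 1) (by omega)

lemma sum_Icc_add_add {mu nu : ℕ → ℕ} {k i j : ℕ} (hmu : ∀ i, 1 ≤ i → mu (k + i) = nu i)
    (hj : 1 ≤ j) : ∑ x ∈ Finset.Icc (k + j) (k + i), mu x = ∑ x ∈ Finset.Icc j i, nu x := by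
  rw [← Finset.map_add_left_Icc, Finset.sum_map]
  exact Finset.sum_congr rfl fun x hx => hmu x (hj.trans (Finset.mem_Icc.mp hx).1)

lemma playAll_mu_of_lt {i : ℕ} (s : BarredState) (js : List ℕ) (h : ∀ j ∈ js, i < j - 1) :
    (playAll s js).mu i = s.mu i := by
  induction js generalizing s with
  | nil => rfl
  | cons j js ih =>
    exact (ih (s.move j) fun j' hj' => h j' (List.mem_cons_of_mem _ hj')).trans
      (moveMu_of_lt (h j List.mem_cons_self))

lemma le_playAll_mu {i : ℕ} (s : BarredState) (js : List ℕ) (h : ∀ j ∈ js, i < j) :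
    s.mu i ≤ (playAll s js).mu i := by
  induction js generalizing s with
  | nil => exact le_rfl
  | cons j js ih =>
    exact (le_moveMu_of_lt (h j List.mem_cons_self)).trans
      (ih (s.move j) fun j' hj' => h j' (List.mem_cons_of_mem _ hj'))

lemma IsFusePrefix.of_le {k : ℕ} {f g : ℕ → ℕ} (hf : IsFusePrefix k f)
    (hlow : ∀ i, 1 ≤ i → i ≤ k - 1 → g i = f i) (htop : f k ≤ g k) : IsFusePrefix k g := by
  obtain ⟨hf₁, hf₂, hf₃⟩ := hf
  refine ⟨fun i hi hik => hlow i hi hik ▸ hf₁ i hi hik, hf₂.trans htop, ?_⟩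
  rintro i hi hik ⟨hgi, hgi'⟩
  rcases (show i + 1 ≤ k by omega).eq_or_lt with h | h
  · subst h; omega
  · exact hf₃ i hi hik ⟨hlow i hi hik ▸ hgi, hlow (i + 1) (by omega) (by omega) ▸ hgi'⟩

namespace BarredState

structure IsShift (k : ℕ) (s t : BarredState) : Prop where
  mu_add : ∀ i, 1 ≤ i → s.mu (k + i) = t.mu i
  bars_eq : s.bars = {i | 1 ≤ i ∧ i ≤ k} ∪ (fun i => k + i) '' t.bars

namespace IsShift

variable {k : ℕ} {s t : BarredState}

lemma add_mem_bars_iff (h : IsShift k s t) {j : ℕ} (hj : 1 ≤ j) :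
    k + j ∈ s.bars ↔ j ∈ t.bars := by
  rw [h.bars_eq, Set.mem_union, (add_right_injective k).mem_set_image]
  exact or_iff_right fun ⟨_, hjk⟩ => by omega

lemma move (h : IsShift k s t) {j : ℕ} (hj : 1 ≤ j) : IsShift k (s.move (k + j)) (t.move j) where
  mu_add _ hi := moveMu_add_add h.mu_add hj hi
  bars_eq := by
    ext i
    obtain hik | ⟨i, hi, rfl⟩ : i ≤ k ∨ ∃ i', 1 ≤ i' ∧ i = k + i' :=
      (le_or_gt i k).imp_right fun hik => ⟨i - k, by omega, by omega⟩
    · have hprefix : 1 ≤ i → moveMu s.mu (k + j) i ≠ 0 := fun hi =>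
        (Nat.pos_of_ne_zero (s.bars_ne i (h.bars_eq ▸ Or.inl ⟨hi, hik⟩))).trans_le
          (le_moveMu_of_lt (by omega)) |>.ne'
      have hnot : i ∉ (fun i => k + i) '' (t.move j).bars := by
        rintro ⟨i', hi', hii'⟩
        have := (t.move j).bars_pos i' hi'
        dsimp only at hii'
        omega
      simp only [BarredState.move, Set.mem_union, Set.mem_ofPred_eq] at hnot ⊢
      simp only [hnot, or_false]
      constructor
      · rintro (⟨hi, -⟩ | ⟨hi, -⟩) <;> exact ⟨hi, hik⟩
      · rintro ⟨hi, -⟩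
        exact Or.inl ⟨hi, by omega, hprefix hi⟩
    · rw [Set.mem_union, (add_right_injective k).mem_set_image]
      simp only [BarredState.move, Set.mem_union, Set.mem_ofPred_eq,
        moveMu_add_add h.mu_add hj hi, sum_Icc_add_add h.mu_add hj]
      rw [show k + j - 1 = k + (j - 1) by omega]
      simp only [add_le_add_iff_left, hi, show ¬k + i ≤ k by omega, show 1 ≤ k + i by omega,
        true_and, and_false, false_or]

lemma playAll (h : IsShift k s t) (js : List ℕ) (hjs : ∀ j ∈ js, 1 ≤ j) :
    IsShift k (_root_.playAll s (js.map (k + ·))) (_root_.playAll t js) := by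
  induction js generalizing s t with
  | nil => exact h
  | cons j js ih =>
    exact ih (h.move (hjs j List.mem_cons_self)) fun j' hj' => hjs j' (List.mem_cons_of_mem _ hj')

lemma playableSeq_iff (h : IsShift k s t) (js : List ℕ) (hjs : ∀ j ∈ js, 1 ≤ j) :
    PlayableSeq t js ↔ PlayableSeq s (js.map (k + ·)) := by
  induction js generalizing s t with
  | nil => exact Iff.rfl
  | cons j js ih =>
    have hj := hjs j List.mem_cons_self
    exact and_congr (h.add_mem_bars_iff hj).symm <|
      ih (h.move hj) fun j' hj' => hjs j' (List.mem_cons_of_mem _ hj')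

end IsShift

end BarredState

/-- Prepending a `k`-fuse prefix to a state `t` gives a state `s` in which play
beyond position `k` mirrors play in `t`: `(i_1,…,i_m)` is playable from `t` iff
`(k+i_1,…,k+i_m)` is playable from `s`, and the resulting state again consists of a
`k`-fuse prefix (with the same entries except possibly a larger `k`-th entry)
followed by the result of playing in `t`, with correspondingly shifted bars. -/
theorem stmt8 (k : ℕ) (hk : 1 ≤ k) (f : ℕ → ℕ) (hf : IsFusePrefix k f)
    (t s : BarredState)
    (hmu1 : ∀ i, 1 ≤ i → i ≤ k → s.mu i = f i)
    (hmu2 : ∀ i, 1 ≤ i → s.mu (k + i) = t.mu i)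
    (hS : s.bars = {i | 1 ≤ i ∧ i ≤ k} ∪ (fun i => k + i) '' t.bars) :
    ∀ js : List ℕ, (∀ j ∈ js, 1 ≤ j) →
      ((PlayableSeq t js ↔ PlayableSeq s (js.map (k + ·))) ∧
        (PlayableSeq t js →
          (∀ i, 1 ≤ i → i ≤ k - 1 → (playAll s (js.map (k + ·))).mu i = f i) ∧
          f k ≤ (playAll s (js.map (k + ·))).mu k ∧
          IsFusePrefix k (playAll s (js.map (k + ·))).mu ∧
          (∀ i, 1 ≤ i →
            (playAll s (js.map (k + ·))).mu (k + i) = (playAll t js).mu i) ∧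
          (playAll s (js.map (k + ·))).bars =
            {i | 1 ≤ i ∧ i ≤ k} ∪ (fun i => k + i) '' (playAll t js).bars)) := by
  intro js hjs
  have hshift : BarredState.IsShift k s t := ⟨hmu2, hS⟩
  have hmoves : ∀ j ∈ js.map (k + ·), k < j := by
    simp only [List.mem_map]
    rintro _ ⟨j, hj, rfl⟩
    have := hjs j hj
    omega
  have hlow : ∀ i, 1 ≤ i → i ≤ k - 1 → (playAll s (js.map (k + ·))).mu i = f i :=
    fun i hi hik => (playAll_mu_of_lt s _ fun j hj => by have := hmoves j hj; omega).trans
      (hmu1 i hi (by omega))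
  have htop : f k ≤ (playAll s (js.map (k + ·))).mu k :=
    hmu1 k hk le_rfl ▸ le_playAll_mu s _ hmoves
  have hend := hshift.playAll js hjs
  exact ⟨hshift.playableSeq_iff js hjs,
    fun _ => ⟨hlow, htop, hf.of_le hlow htop, hend.mu_add, hend.bars_eq⟩⟩
end

section
/- Let k ≥ 1, let s be a barred state having a k-fuse, and let (j_1,…,j_m) be a finite sequence playable from s with j_1 ≤ k. Then the sequence is weakly decreasing, j_1 ≥ j_2 ≥ ⋯ ≥ j_m, and m ≤ k. Moreover, the constant sequence (1,1,…,1) of length k is playable from s; hence the maximal length of a playable sequence from s whose first entry is at most k is exactly k. -/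
namespace Stmt10Aux

/-- Invariant on the `μ`-part: all entries in `[1,q]` nonzero, consecutive sums
at least `3`, and the entry at `q` at least `3`. -/
def MuCond (q : ℕ) (t : BarredState) : Prop :=
  (∀ i, 1 ≤ i → i ≤ q → t.mu i ≠ 0) ∧
  (∀ i, 1 ≤ i → i + 1 ≤ q → 3 ≤ t.mu i + t.mu (i + 1)) ∧
  3 ≤ t.mu q

lemma moveMu_of_le {mu : ℕ → ℕ} {j i : ℕ} (hj : 1 ≤ j) (h : j ≤ i) :
    moveMu mu j i = mu (i + 1) := by
  unfold moveMu
  rw [if_neg (by omega), if_neg (by omega)]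

lemma moveMu_of_eq {mu : ℕ → ℕ} {j i : ℕ} (h : i = j - 1) :
    moveMu mu j i = mu (j - 1) + mu j := by
  unfold moveMu
  rw [if_neg (by omega), if_pos h]

lemma moveMu_of_lt {mu : ℕ → ℕ} {j i : ℕ} (h : i < j - 1) :
    moveMu mu j i = mu i := by
  unfold moveMu
  rw [if_pos h]

lemma sum_ge_one {mu : ℕ → ℕ} {j i : ℕ} (h : j ≤ i) :
    mu j ≤ ∑ t ∈ Finset.Icc j i, mu t :=
  Finset.single_le_sum (fun _ _ => Nat.zero_le _) (Finset.mem_Icc.mpr ⟨le_refl j, h⟩)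

lemma sum_ge_two {mu : ℕ → ℕ} {j i : ℕ} (h : j + 1 ≤ i) :
    mu j + mu (j + 1) ≤ ∑ t ∈ Finset.Icc j i, mu t := by
  calc mu j + mu (j + 1) = ∑ t ∈ Finset.Icc j (j + 1), mu t := by
        rw [Finset.sum_Icc_succ_top (by omega), Finset.Icc_self, Finset.sum_singleton]
      _ ≤ _ := Finset.sum_le_sum_of_subset (Finset.Icc_subset_Icc_right h)

lemma bars_step {q j : ℕ} {t : BarredState} (hmu : MuCond q t) (hj1 : 1 ≤ j) (hjq : j ≤ q) :
    ∀ i ∈ (t.move j).bars, i ≤ j ∧ i + 1 ≤ q := by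
  intro i hi
  simp only [BarredState.move, Set.mem_union, Set.mem_setOf_eq] at hi
  rcases hi with ⟨h1, h2, h3⟩ | ⟨h1, h2, h3, h4⟩
  · omega
  · rcases Nat.lt_or_ge i (j + 1) with h | h
    · have hij : i = j := by omega
      subst hij
      rcases Nat.lt_or_ge i q with h' | h'
      · omega
      · exfalso
        have hq : i = q := by omega
        subst hq
        have hs := sum_ge_one (mu := t.mu) (le_refl i)
        have := hmu.2.2
        omega
    · exfalso
      have hs := sum_ge_two (mu := t.mu) h
      have h3' : 3 ≤ t.mu j + t.mu (j + 1) := by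
        rcases Nat.lt_or_ge j q with h' | h'
        · exact hmu.2.1 j hj1 (by omega)
        · have hq : j = q := by omega
          subst hq
          have := hmu.2.2
          omega
      omega

lemma mu_step {q j : ℕ} {t : BarredState} (hmu : MuCond q t) (hq : 2 ≤ q) (hj1 : 1 ≤ j)
    (hjq : j ≤ q) : MuCond (q - 1) (t.move j) := by
  obtain ⟨h0, h1, h2⟩ := hmu
  refine ⟨?_, ?_, ?_⟩
  · intro i hi1 hiq
    show moveMu t.mu j i ≠ 0
    rcases lt_trichotomy i (j - 1) with h | h | h
    · rw [moveMu_of_lt h]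
      exact h0 i hi1 (by omega)
    · rw [moveMu_of_eq h]
      have := h0 j hj1 hjq
      omega
    · rw [moveMu_of_le hj1 (by omega)]
      exact h0 (i + 1) (by omega) (by omega)
  · intro i hi1 hiq
    show 3 ≤ moveMu t.mu j i + moveMu t.mu j (i + 1)
    by_cases hc1 : i + 1 < j - 1
    · rw [moveMu_of_lt (by omega), moveMu_of_lt hc1]
      exact h1 i hi1 (by omega)
    · by_cases hc2 : i + 1 = j - 1
      · rw [moveMu_of_lt (by omega), moveMu_of_eq hc2]
        have h' := h1 i hi1 (by omega)
        rw [hc2] at h'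
        omega
      · by_cases hc3 : i = j - 1
        · have hji : j = i + 1 := by omega
          rw [moveMu_of_eq hc3, moveMu_of_le hj1 (by omega)]
          have h' := h1 j hj1 (by omega)
          have e : t.mu (i + 1 + 1) = t.mu (j + 1) := by rw [hji]
          omega
        · rw [moveMu_of_le hj1 (by omega), moveMu_of_le hj1 (by omega)]
          exact h1 (i + 1) (by omega) (by omega)
  · show 3 ≤ moveMu t.mu j (q - 1)
    by_cases hc : j = q
    · rw [moveMu_of_eq (by omega)]
      subst hc
      omega
    · rw [moveMu_of_le hj1 (by omega)]
      have e : q - 1 + 1 = q := by omega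
      rw [e]
      exact h2

lemma main_lemma : ∀ (l : List ℕ) (q : ℕ) (t : BarredState), 1 ≤ q → MuCond q t →
    (∀ i ∈ t.bars, i ≤ q) → PlayableSeq t l →
    List.Chain' (fun a b => b ≤ a) l ∧ l.length ≤ q := by
  intro l
  induction l with
  | nil => intro q t hq _ _ _; exact ⟨List.isChain_nil, by simp⟩
  | cons j rest ih =>
    intro q t hq hmu hbars hplay
    obtain ⟨hj, hrest⟩ := hplay
    have hj1 : 1 ≤ j := t.bars_pos j hj
    have hjq : j ≤ q := hbars j hj
    have hstep := bars_step hmu hj1 hjq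
    rcases rest with _ | ⟨a, rest'⟩
    · exact ⟨List.isChain_singleton j, by simpa using hq⟩
    · obtain ⟨ha, hrest'⟩ := hrest
      have haj := hstep a ha
      have hq2 : 2 ≤ q := by
        have := (t.move j).bars_pos a ha
        omega
      have hmu' := mu_step hmu hq2 hj1 hjq
      obtain ⟨hc, hl⟩ := ih (q - 1) (t.move j) (by omega) hmu'
        (fun i hi => by have := hstep i hi; omega) ⟨ha, hrest'⟩
      refine ⟨List.isChain_cons_cons.mpr ⟨haj.1, hc⟩, ?_⟩
      simp only [List.length_cons] at hl ⊢
      omega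

lemma fuse_muCond {k : ℕ} (hk : 1 ≤ k) {s : BarredState} (hf : IsFusePrefix k s.mu) :
    MuCond k s := by
  obtain ⟨h1, h2, h3⟩ := hf
  refine ⟨?_, ?_, h2⟩
  · intro i hi1 hik
    by_cases h : i ≤ k - 1
    · rcases h1 i hi1 h with h | h <;> omega
    · have e : i = k := by omega
      subst e
      omega
  · intro i hi1 hik
    by_cases h : i + 1 ≤ k - 1
    · rcases h1 i hi1 (by omega) with ha | ha <;> rcases h1 (i + 1) (by omega) h with hb | hb
      · exact absurd ⟨ha, hb⟩ (h3 i hi1 (by omega))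
      all_goals omega
    · have e : i + 1 = k := by omega
      have h2' : 3 ≤ s.mu (i + 1) := by rw [e]; exact h2
      omega

lemma rep : ∀ (k : ℕ), 1 ≤ k → ∀ (s : BarredState), IsFusePrefix k s.mu → 1 ∈ s.bars →
    PlayableSeq s (List.replicate k 1) := by
  intro k
  induction k with
  | zero => intro h; omega
  | succ n ih =>
    intro _ s hf hb
    obtain ⟨h1, h2, h3⟩ := hf
    rw [List.replicate_succ]
    refine ⟨hb, ?_⟩
    by_cases hn : n = 0
    · subst hn
      exact trivial
    · have hn1 : 1 ≤ n := by omega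
      have hshift : ∀ i, 1 ≤ i → (s.move 1).mu i = s.mu (i + 1) := fun i hi =>
        moveMu_of_le (le_refl 1) hi
      apply ih hn1
      · refine ⟨?_, ?_, ?_⟩
        · intro i hi1 hin
          rw [show (s.move 1).mu i = s.mu (i + 1) from hshift i hi1]
          exact h1 (i + 1) (by omega) (by omega)
        · rw [hshift n hn1]
          exact h2
        · intro i hi1 hin
          rw [hshift i hi1, hshift (i + 1) (by omega)]
          exact h3 (i + 1) (by omega) (by omega)
      · simp only [BarredState.move, Set.mem_union, Set.mem_setOf_eq]
        right
        refine ⟨le_refl 1, le_refl 1, ?_, ?_⟩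
        · rw [moveMu_of_le (le_refl 1) (le_refl 1)]
          show s.mu 2 ≠ 0
          by_cases h : n = 1
          · subst h
            norm_num at h2
            omega
          · rcases h1 2 (by omega) (by omega) with h' | h' <;> omega
        · rw [Finset.Icc_self, Finset.sum_singleton]
          rcases h1 1 le_rfl (by omega) with h' | h' <;> omega

end Stmt10Aux

/-- From a state with a `k`-fuse, any playable sequence whose first entry is at most
`k` is weakly decreasing and has length at most `k`; moreover the constant sequence
`(1,…,1)` of length `k` is playable, so the maximal such length is exactly `k`. -/
theorem stmt10 (k : ℕ) (hk : 1 ≤ k) (s : BarredState) (hs : HasFuse k s) :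
    (∀ (j : ℕ) (rest : List ℕ), (∀ i ∈ j :: rest, 1 ≤ i) → j ≤ k →
      PlayableSeq s (j :: rest) →
      List.Chain' (fun a b => b ≤ a) (j :: rest) ∧ (j :: rest).length ≤ k) ∧
    PlayableSeq s (List.replicate k 1) := by
  obtain ⟨hfuse, hbars⟩ := hs
  constructor
  · intro j rest hpos hjk hplay
    obtain ⟨hj, hrest⟩ := hplay
    have hj1 : 1 ≤ j := s.bars_pos j hj
    have hmu : Stmt10Aux.MuCond k s := Stmt10Aux.fuse_muCond hk hfuse
    have hstep := Stmt10Aux.bars_step hmu hj1 hjk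
    rcases rest with _ | ⟨a, rest'⟩
    · exact ⟨List.isChain_singleton j, by simpa using hk⟩
    · obtain ⟨ha, hrest'⟩ := hrest
      have haj := hstep a ha
      have hk2 : 2 ≤ k := by
        have := (s.move j).bars_pos a ha
        omega
      have hmu' := Stmt10Aux.mu_step hmu hk2 hj1 hjk
      obtain ⟨hc, hl⟩ := Stmt10Aux.main_lemma (a :: rest') (k - 1) (s.move j) (by omega) hmu'
        (fun i hi => by have := hstep i hi; omega) ⟨ha, hrest'⟩
      refine ⟨List.isChain_cons_cons.mpr ⟨haj.1, hc⟩, ?_⟩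
      simp only [List.length_cons] at hl ⊢
      omega
  · exact Stmt10Aux.rep k hk s hfuse (hbars 1 le_rfl hk)
end

section
/- Fix k ≥ 1 and m with 0 ≤ m ≤ k. The number of weakly decreasing sequences (j_1 ≥ j_2 ≥ ⋯ ≥ j_m) of positive integers with j_1 ≤ k such that, writing their distinct values in decreasing order as v_1 > v_2 > ⋯ > v_p with respective multiplicities r_1,…,r_p and setting v_0 = k+1, one has r_q ≤ v_{q−1} − v_q for every 1 ≤ q ≤ p, equals c(m, k−m), the number of weak compositions of m with exactly k−m zeros. Moreover, for m > k there are no such sequences. -/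
/-- A weakly decreasing sequence of positive integers with first entry at most `k`
such that, writing the distinct values in decreasing order as `v_1 > ⋯ > v_p`
(that is, `js.dedup`) with multiplicities `r_1, …, r_p` and setting `v_0 = k+1`,
one has `r_q ≤ v_{q-1} - v_q` for all `q`. -/
def GoodSeq (k : ℕ) (js : List ℕ) : Prop :=
  (∀ j ∈ js, 1 ≤ j) ∧ (∀ a ∈ js.head?, a ≤ k) ∧
  List.Chain' (fun a b => b ≤ a) js ∧
  ∀ (q : ℕ) (hq : q < js.dedup.length),
    js.count (js.dedup[q]'hq) ≤
      (((k + 1) :: js.dedup)[q]'(by simp only [List.length_cons]; omega)) -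
        js.dedup[q]'hq

/-!
Read a weak composition `l` from left to right as a walk down the levels `weight l, …, 1`,
where `weight l = l.sum + l.count 0`: a zero skips one level, and an entry `r + 1` covers
`r + 1` levels and emits `r + 1` copies of the lowest of them. The emitted sequence is good,
since the run of `r + 1` copies sits exactly `r + 1` levels below the previous run (or below
`k + 1`), plus one for every zero in between. Conversely a good sequence is cut into its runs,
and the gap above each run fixes the number of zeros before it, so every good sequence with
top `k` comes from exactly one composition of weight `k`. A composition of `m` with `k - m`
zeros has weight `k` and its image has length `m`.
-/

open List

namespace List

variable {α : Type*}

theorem forall_getElem_cons_iff_forall_mem_zip {P : α → α → Prop} (a : α) (l : List α) :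
    (∀ (q : ℕ) (hq : q < l.length),
      P ((a :: l)[q]'(by simp only [length_cons]; omega)) l[q]) ↔
    ∀ p ∈ (a :: l).zip l, P p.1 p.2 := by
  constructor
  · intro h p hp
    obtain ⟨q, hq, rfl⟩ := mem_iff_getElem.1 hp
    simp only [length_zip, length_cons] at hq
    simpa only [getElem_zip] using h q (by omega)
  · intro h q hq
    have hq' : q < ((a :: l).zip l).length := by simp only [length_zip, length_cons]; omega
    simpa only [getElem_zip] using h _ (getElem_mem hq')

theorem dedup_replicate_succ_append [DecidableEq α] {x : α} {t : List α} (hx : x ∉ t) (n : ℕ) :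
    (replicate (n + 1) x ++ t).dedup = x :: t.dedup := by
  induction n with
  | zero => exact dedup_cons_of_notMem hx
  | succ n ih => rw [replicate_succ, cons_append, dedup_cons_of_mem (by simp), ih]

theorem replicate_append_inj [DecidableEq α] {x : α} {a b : ℕ} {s t : List α} (hs : x ∉ s)
    (ht : x ∉ t) (h : replicate a x ++ s = replicate b x ++ t) : a = b ∧ s = t := by
  have hab : a = b := by
    simpa [count_eq_zero_of_not_mem hs, count_eq_zero_of_not_mem ht] using congrArg (count x) h
  subst hab
  exact ⟨rfl, append_cancel_left h⟩

theorem exists_eq_replicate_append_of_pairwise [LinearOrder α] {j : α} {l : List α}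
    (h : (j :: l).Pairwise (· ≥ ·)) :
    ∃ r t, j :: l = replicate (r + 1) j ++ t ∧ ∀ x ∈ t, x < j := by
  induction l with
  | nil => exact ⟨0, [], rfl, by simp⟩
  | cons b l ih =>
    obtain ⟨hjb, hjl, hbl⟩ : b ≤ j ∧ (∀ x ∈ l, x ≤ j) ∧ ∀ x ∈ l, x ≤ b := by
      simp only [pairwise_cons, mem_cons, forall_eq_or_imp] at h
      exact ⟨h.1.1, h.1.2, h.2.1⟩
    rcases hjb.eq_or_lt with rfl | hbj
    · have htail : (b :: l).Pairwise (· ≥ ·) :=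
        pairwise_cons.2 ⟨hjl, (h.sublist (sublist_cons_self _ _)).of_cons⟩
      obtain ⟨r, t, hl, ht⟩ := ih htail
      exact ⟨r + 1, t, by rw [replicate_succ, cons_append, ← hl], ht⟩
    · refine ⟨0, b :: l, rfl, ?_⟩
      simp only [mem_cons, forall_eq_or_imp]
      exact ⟨hbj, fun x hx => (hbl x hx).trans_lt hbj⟩

end List

theorem goodSeq_iff_pairwise_zip {k : ℕ} {js : List ℕ} :
    GoodSeq k js ↔ (∀ j ∈ js, 1 ≤ j) ∧ (∀ a ∈ js.head?, a ≤ k) ∧ js.Pairwise (· ≥ ·) ∧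
      ∀ p ∈ ((k + 1) :: js.dedup).zip js.dedup, js.count p.2 ≤ p.1 - p.2 := by
  rw [GoodSeq, List.Chain', isChain_iff_pairwise,
    forall_getElem_cons_iff_forall_mem_zip (P := fun a v => js.count v ≤ a - v)]

theorem goodSeq_nil (k : ℕ) : GoodSeq k [] := by
  simp [goodSeq_iff_pairwise_zip]

namespace GoodSeq

theorem mono {k k' : ℕ} {js : List ℕ} (h : GoodSeq k js) (hk : k ≤ k') : GoodSeq k' js := by
  rw [goodSeq_iff_pairwise_zip] at h ⊢
  obtain ⟨hpos, hhead, hdec, hgap⟩ := h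
  refine ⟨hpos, fun a ha => (hhead a ha).trans hk, hdec, ?_⟩
  cases hded : js.dedup with
  | nil => simp
  | cons v vs =>
    rw [hded] at hgap
    rw [zip_cons_cons, forall_mem_cons] at hgap ⊢
    exact ⟨by have := hgap.1; dsimp only at this ⊢; omega, hgap.2⟩

theorem le_of_mem {k : ℕ} {js : List ℕ} (h : GoodSeq k js) {x : ℕ} (hx : x ∈ js) : x ≤ k := by
  obtain ⟨-, hhead, hdec, -⟩ := goodSeq_iff_pairwise_zip.1 h
  cases js with
  | nil => simp at hx
  | cons a t =>
    have ha : a ≤ k := hhead a rfl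
    rcases mem_cons.1 hx with rfl | hx
    · exact ha
    · exact (rel_of_pairwise_cons hdec hx).trans ha

end GoodSeq

theorem goodSeq_replicate_succ_append_iff {k j r : ℕ} {t : List ℕ} (ht : ∀ x ∈ t, x ≤ j) :
    GoodSeq k (replicate (r + 1) (j + 1) ++ t) ↔ r + 1 ≤ k - j ∧ GoodSeq j t := by
  have hjt : j + 1 ∉ t := fun h => by have := ht _ h; omega
  have hpos : (∀ x ∈ replicate (r + 1) (j + 1) ++ t, 1 ≤ x) ↔ ∀ x ∈ t, 1 ≤ x := by
    simp [or_imp, forall_and]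
  have hhead : (replicate (r + 1) (j + 1) ++ t).head? = some (j + 1) := by simp [replicate_succ]
  have hdec : (replicate (r + 1) (j + 1) ++ t).Pairwise (· ≥ ·) ↔ t.Pairwise (· ≥ ·) := by
    simp only [pairwise_append, pairwise_replicate, mem_replicate]
    exact ⟨fun h => h.2.1,
      fun h => ⟨Or.inr le_rfl, h, fun a ha b hb => ha.2 ▸ (ht b hb).trans j.le_succ⟩⟩
  have hrun : (replicate (r + 1) (j + 1) ++ t).count (j + 1) = r + 1 := by
    simp [count_eq_zero_of_not_mem hjt]
  have hgap : (∀ p ∈ ((j + 1) :: t.dedup).zip t.dedup,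
      (replicate (r + 1) (j + 1) ++ t).count p.2 ≤ p.1 - p.2) ↔
      ∀ p ∈ ((j + 1) :: t.dedup).zip t.dedup, t.count p.2 ≤ p.1 - p.2 := by
    refine forall₂_congr fun p hp => ?_
    have hp2 : p.2 ≤ j := ht _ (mem_dedup.1 (of_mem_zip hp).2)
    rw [count_append, count_replicate]
    simp only [beq_iff_eq]
    rw [if_neg (by omega), zero_add]
  have hthead : ∀ a ∈ t.head?, a ≤ j := fun a ha => ht a (mem_of_mem_head? ha)
  rw [goodSeq_iff_pairwise_zip, goodSeq_iff_pairwise_zip, dedup_replicate_succ_append hjt,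
    zip_cons_cons, forall_mem_cons, hpos, hhead, hdec, hgap, hrun]
  simp only [Option.mem_some_iff]
  constructor
  · rintro ⟨hp, -, hd, hr, hg⟩
    exact ⟨by omega, hp, hthead, hd, hg⟩
  · rintro ⟨hr, hp, -, hd, hg⟩
    exact ⟨hp, by omega, hd, by omega, hg⟩

namespace WeakComposition

def weight (l : List ℕ) : ℕ := l.sum + l.count 0

@[simp] theorem weight_nil : weight [] = 0 := rfl

@[simp] theorem weight_cons_zero (l : List ℕ) : weight (0 :: l) = weight l + 1 := by
  simp only [weight, sum_cons, count_cons_self]; omega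

@[simp] theorem weight_cons_succ (r : ℕ) (l : List ℕ) :
    weight ((r + 1) :: l) = weight l + (r + 1) := by
  simp only [weight, sum_cons, count_cons_of_ne r.succ_ne_zero]; omega

@[simp] theorem weight_replicate_zero_append (z : ℕ) (l : List ℕ) :
    weight (replicate z 0 ++ l) = weight l + z := by
  induction z with
  | zero => simp
  | succ z ih => rw [replicate_succ, cons_append, weight_cons_zero, ih]; omega

def toGoodSeq : List ℕ → List ℕ
  | [] => []
  | 0 :: l => toGoodSeq l
  | (r + 1) :: l => replicate (r + 1) (weight l + 1) ++ toGoodSeq l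

@[simp] theorem length_toGoodSeq (l : List ℕ) : (toGoodSeq l).length = l.sum := by
  induction l using toGoodSeq.induct <;> simp [toGoodSeq, *]

@[simp] theorem toGoodSeq_replicate_zero_append (z : ℕ) (l : List ℕ) :
    toGoodSeq (replicate z 0 ++ l) = toGoodSeq l := by
  induction z with
  | zero => rfl
  | succ z ih => rw [replicate_succ, cons_append, toGoodSeq, ih]

theorem goodSeq_toGoodSeq (l : List ℕ) : GoodSeq (weight l) (toGoodSeq l) := by
  induction l using toGoodSeq.induct with
  | case1 => exact goodSeq_nil 0
  | case2 l ih => exact ih.mono (by simp)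
  | case3 r l ih =>
    rw [toGoodSeq, goodSeq_replicate_succ_append_iff fun x hx => ih.le_of_mem hx]
    exact ⟨by simp, ih⟩

theorem toGoodSeq_eq_nil_iff {l : List ℕ} : toGoodSeq l = [] ↔ l = replicate (weight l) 0 := by
  induction l using toGoodSeq.induct with
  | case1 => simp [toGoodSeq]
  | case2 l ih => simp [toGoodSeq, replicate_succ, ih]
  | case3 r l _ => simp [toGoodSeq, eq_replicate_iff]

theorem toGoodSeq_eq_replicate_succ_append_iff {l t : List ℕ} {j r : ℕ} (ht : ∀ x ∈ t, x ≤ j) :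
    toGoodSeq l = replicate (r + 1) (j + 1) ++ t ↔
      ∃ z l', l = replicate z 0 ++ (r + 1) :: l' ∧ weight l' = j ∧ toGoodSeq l' = t := by
  constructor
  · intro h
    induction l using toGoodSeq.induct with
    | case1 => simp [toGoodSeq] at h
    | case2 l ih =>
      obtain ⟨z, l', rfl, hl'⟩ := ih h
      exact ⟨z + 1, l', rfl, hl'⟩
    | case3 s l _ =>
      have hw : weight l = j := by simpa [replicate_succ, toGoodSeq] using congrArg head? h
      subst hw
      obtain ⟨hsr, hl⟩ := replicate_append_inj
        (fun hx => by have := (goodSeq_toGoodSeq l).le_of_mem hx; omega)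
        (fun hx => by have := ht _ hx; omega) h
      obtain rfl : s = r := by omega
      exact ⟨0, l, rfl, rfl, hl⟩
  · rintro ⟨z, l', rfl, rfl, rfl⟩
    simp [toGoodSeq]

theorem existsUnique_toGoodSeq_eq {k : ℕ} {js : List ℕ} (h : GoodSeq k js) :
    ∃! l, weight l = k ∧ toGoodSeq l = js := by
  induction k using Nat.strong_induction_on generalizing js with
  | _ k ih =>
    cases js with
    | nil =>
      have hw : weight (replicate k 0) = k := by simp [weight]
      refine ⟨replicate k 0, ⟨hw, toGoodSeq_eq_nil_iff.2 (by rw [hw])⟩, ?_⟩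
      rintro l ⟨rfl, hl⟩
      exact toGoodSeq_eq_nil_iff.1 hl
    | cons i tl =>
      obtain ⟨j, rfl⟩ : ∃ j, i = j + 1 := Nat.exists_eq_add_one.2 (h.1 i mem_cons_self)
      obtain ⟨r, t, hjs, ht⟩ := exists_eq_replicate_append_of_pairwise
        (goodSeq_iff_pairwise_zip.1 h).2.2.1
      have ht' : ∀ x ∈ t, x ≤ j := fun x hx => Nat.le_of_lt_succ (ht x hx)
      rw [hjs, goodSeq_replicate_succ_append_iff ht'] at h
      obtain ⟨hrun, hgood⟩ := h
      obtain ⟨l', ⟨hw', hl'⟩, huniq⟩ := ih j (by omega) hgood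
      rw [hjs]
      simp only [toGoodSeq_eq_replicate_succ_append_iff ht']
      refine ⟨replicate (k - j - (r + 1)) 0 ++ (r + 1) :: l',
        ⟨by simp only [weight_replicate_zero_append, weight_cons_succ]; omega, _, _, rfl, hw', hl'⟩,
        ?_⟩
      rintro l ⟨hw, z, l'', rfl, hw'', hl''⟩
      obtain rfl := huniq l'' ⟨hw'', hl''⟩
      simp only [weight_replicate_zero_append, weight_cons_succ] at hw
      congr 2
      omega

end WeakComposition

theorem GoodSeq.length_le {k : ℕ} {js : List ℕ} (h : GoodSeq k js) : js.length ≤ k := by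
  obtain ⟨l, ⟨rfl, rfl⟩, -⟩ := WeakComposition.existsUnique_toGoodSeq_eq h
  simp [WeakComposition.weight]

open WeakComposition in
theorem stmt14_general (k : ℕ) :
    (∀ m ≤ k,
      Set.ncard {js : List ℕ | js.length = m ∧ GoodSeq k js} = wc m (k - m)) ∧
    (∀ m, k < m → {js : List ℕ | js.length = m ∧ GoodSeq k js} = ∅) := by
  refine ⟨fun m hm => ?_, fun m hm => ?_⟩
  · set S := {l : List ℕ | l.sum = m ∧ l.count 0 = k - m}
    have hweight : ∀ l ∈ S, weight l = k := fun l hl => by simp only [weight, hl.1, hl.2]; omega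
    have himage : toGoodSeq '' S = {js : List ℕ | js.length = m ∧ GoodSeq k js} := by
      ext js
      constructor
      · rintro ⟨l, hl, rfl⟩
        exact ⟨by rw [length_toGoodSeq, hl.1], hweight l hl ▸ goodSeq_toGoodSeq l⟩
      · rintro ⟨rfl, h⟩
        obtain ⟨l, ⟨hw, rfl⟩, -⟩ := existsUnique_toGoodSeq_eq h
        refine ⟨l, ⟨(length_toGoodSeq l).symm, ?_⟩, rfl⟩
        rw [length_toGoodSeq, ← hw, weight]
        omega
    have hinj : Set.InjOn toGoodSeq S := fun l₁ h₁ l₂ h₂ he =>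
      (existsUnique_toGoodSeq_eq (goodSeq_toGoodSeq l₁)).unique ⟨rfl, rfl⟩
        ⟨(hweight l₂ h₂).trans (hweight l₁ h₁).symm, he.symm⟩
    rw [← himage, hinj.ncard_image, wc]
  · refine Set.eq_empty_of_forall_notMem fun js ⟨hlen, h⟩ => ?_
    have := h.length_le
    omega

/-- For `0 ≤ m ≤ k`, the number of such sequences of length `m` is `c(m, k-m)`,
the number of weak compositions of `m` with exactly `k-m` zeros; for `m > k`
there are none. -/
theorem stmt14 (k : ℕ) (hk : 1 ≤ k) :
    (∀ m ≤ k,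
      Set.ncard {js : List ℕ | js.length = m ∧ GoodSeq k js} = wc m (k - m)) ∧
    (∀ m, k < m → {js : List ℕ | js.length = m ∧ GoodSeq k js} = ∅) :=
  stmt14_general k
end

section
/- Let λ be a partition of n whose jth part is playable. Then β(R_j(λ)) = λ. Conversely, if κ is any partition of n with β(κ) = λ, then there exists a playable index j with κ = R_j(λ); that is, the maps R_j for playable j yield exactly the β-preimages of λ. -/
/-- The Bulgarian Solitaire move on a multiset of parts: remove one from each part,
keep the positive results, and add a new part equal to the number of parts. -/
def betaM (M : Multiset ℕ) : Multiset ℕ :=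
  ((M.map fun x => x - 1).filter (0 < ·)) + {Multiset.card M}

lemma plen_spec (lam : ℕ → ℕ)
    (hdec : ∀ i, 1 ≤ i → lam (i + 1) ≤ lam i)
    (hfin : ∃ N, ∀ i, N ≤ i → lam i = 0) :
    {i : ℕ | 1 ≤ i ∧ lam i ≠ 0} = Set.Icc 1 (plen lam) := by
  obtain ⟨N, hN⟩ := hfin
  have hmono : ∀ a b, 1 ≤ a → a ≤ b → lam b ≤ lam a := by
    intro a b ha hab
    induction b, hab using Nat.le_induction with
    | base => exact le_refl _
    | succ k hk ih => exact (hdec k (ha.trans hk)).trans ih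
  set S : Set ℕ := {i : ℕ | 1 ≤ i ∧ lam i ≠ 0} with hS
  have hsub : S ⊆ Set.Icc 1 N := by
    intro i hi
    refine ⟨hi.1, ?_⟩
    by_contra h
    push_neg at h
    exact hi.2 (hN i h.le)
  have hfinS : S.Finite := (Set.finite_Icc 1 N).subset hsub
  rcases S.eq_empty_or_nonempty with he | hne
  · have : plen lam = 0 := by
      unfold plen; rw [← hS, he, Set.ncard_empty]
    rw [this, Set.Icc_eq_empty (by norm_num)]; exact he
  · have hneF : hfinS.toFinset.Nonempty := by
      rwa [Set.Finite.toFinset_nonempty]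
    set M := hfinS.toFinset.max' hneF with hM
    have hMS : M ∈ S := by
      have := hfinS.toFinset.max'_mem hneF
      rwa [Set.Finite.mem_toFinset] at this
    have hSM : S = Set.Icc 1 M := by
      ext i
      constructor
      · intro hi
        refine ⟨hi.1, ?_⟩
        exact hfinS.toFinset.le_max' i (by rwa [Set.Finite.mem_toFinset])
      · intro hi
        refine ⟨hi.1, fun h0 => hMS.2 ?_⟩
        exact Nat.le_zero.mp (h0 ▸ hmono i M hi.1 hi.2)
    have hplen : plen lam = M := by
      unfold plen
      rw [← hS, hSM, ← Finset.coe_Icc, Set.ncard_coe_finset, Nat.card_Icc]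
      omega
    rw [hplen]; exact hSM

/-- `β(R_j(λ)) = λ` for every playable `j`, and conversely every partition `κ` of `n`
with `β(κ) = λ` is `R_{j'}(λ)` for some playable `j'`: the moves `R_j` yield exactly
the `β`-preimages of `λ`. -/
theorem stmt15 (n : ℕ) (lam : ℕ → ℕ)
    (hdec : ∀ i, 1 ≤ i → lam (i + 1) ≤ lam i)
    (hfin : ∃ N, ∀ i, N ≤ i → lam i = 0)
    (hsum : (partsM lam).sum = n)
    (j : ℕ) (hj : Playable lam j) :
    betaM (Rmove lam j) = partsM lam ∧
    (∀ K : Multiset ℕ, (∀ x ∈ K, 0 < x) → K.sum = n →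
      betaM K = partsM lam → ∃ j', Playable lam j' ∧ K = Rmove lam j') := by
  obtain ⟨hj1, hj2, hj3⟩ := hj
  set L := plen lam with hLdef
  -- parts in range are nonzero
  have hnz : ∀ i ∈ Finset.Icc 1 L, lam i ≠ 0 := by
    intro i hi
    rw [Finset.mem_Icc] at hi
    have : i ∈ {i : ℕ | 1 ≤ i ∧ lam i ≠ 0} := by
      rw [plen_spec lam hdec hfin]; exact ⟨hi.1, hi.2⟩
    exact this.2
  -- splitting partsM at an index j0
  have hsplit : ∀ j0 ∈ Finset.Icc 1 L,
      partsM lam = (((Finset.Icc 1 L).erase j0).val.map lam) + {lam j0} := by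
    intro j0 hj0
    unfold partsM
    rw [Finset.erase_val]
    conv_lhs => rw [← Multiset.cons_erase (Finset.mem_def.mp hj0)]
    rw [Multiset.map_cons, add_comm, Multiset.singleton_add]
  have hjmem : j ∈ Finset.Icc 1 L := Finset.mem_Icc.mpr ⟨hj1, hj2⟩
  have hL1 : 1 ≤ L := hj1.trans hj2
  have hcard_erase : ∀ j0 ∈ Finset.Icc 1 L,
      Multiset.card ((Finset.Icc 1 L).erase j0).val = L - 1 := by
    intro j0 hj0
    rw [← Finset.card_def, Finset.card_erase_of_mem hj0, Nat.card_Icc]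
    omega
  constructor
  · -- forward direction
    have hcardR : Multiset.card (Rmove lam j) = lam j := by
      unfold Rmove
      rw [Multiset.card_add, Multiset.card_map, Multiset.card_replicate,
        hcard_erase j hjmem]
      omega
    unfold betaM
    rw [hcardR]
    unfold Rmove
    rw [Multiset.map_add, Multiset.map_map, Multiset.map_replicate,
      Multiset.filter_add]
    have h1 : (((Finset.Icc 1 L).erase j).val.map ((fun x => x - 1) ∘ fun i => lam i + 1)).filter (0 < ·)
        = ((Finset.Icc 1 L).erase j).val.map lam := by
      have : ((fun x => x - 1) ∘ fun i => lam i + 1) = lam := by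
        funext i; simp
      rw [this, Multiset.filter_eq_self]
      intro a ha
      obtain ⟨i, hi, rfl⟩ := Multiset.mem_map.mp ha
      exact Nat.pos_of_ne_zero (hnz i (Finset.mem_of_mem_erase hi))
    have h2 : ((Multiset.replicate (lam j - (L - 1)) ((1:ℕ) - 1)).filter (0 < ·)) = 0 := by
      rw [Multiset.filter_eq_nil]
      intro a ha
      have := (Multiset.eq_of_mem_replicate ha)
      omega
    rw [h1, h2, add_zero, ← hsplit j hjmem]
  · -- converse
    intro K hKpos hKsum hbeta
    set m := Multiset.card K with hm
    unfold betaM at hbeta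
    set F := (K.map fun x => x - 1).filter (0 < ·) with hF
    -- m is a part of lam
    have hmmem : m ∈ partsM lam := by
      rw [← hbeta]
      exact Multiset.mem_add.mpr (Or.inr (Multiset.mem_singleton_self m))
    obtain ⟨j', hj'mem', hj'⟩ := Multiset.mem_map.mp hmmem
    have hj'mem : j' ∈ Finset.Icc 1 L := hj'mem'
    -- cancel to get F
    have hFeq : F = ((Finset.Icc 1 L).erase j').val.map lam := by
      have := hbeta.trans (hsplit j' hj'mem)
      rw [hj'] at this
      exact add_right_cancel this
    -- structure of K
    set K1 := K.filter (1 < ·) with hK1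
    set K2 := K.filter (fun x => ¬ 1 < x) with hK2
    have hKsplit : K = K1 + K2 := (Multiset.filter_add_not _ K).symm
    have hK2rep : K2 = Multiset.replicate (Multiset.card K2) 1 := by
      rw [Multiset.eq_replicate_card]
      intro b hb
      have hb' := Multiset.mem_filter.mp hb
      have := hKpos b hb'.1
      omega
    have hFval : F = K1.map (fun x => x - 1) := by
      rw [hF]
      conv_lhs => rw [hKsplit]
      rw [Multiset.map_add, Multiset.filter_add]
      have e1 : (K1.map fun x => x - 1).filter (0 < ·) = K1.map fun x => x - 1 := by
        rw [Multiset.filter_eq_self]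
        intro a ha
        obtain ⟨x, hx, rfl⟩ := Multiset.mem_map.mp ha
        have := Multiset.mem_filter.mp hx
        omega
      have e2 : (K2.map fun x => x - 1).filter (0 < ·) = 0 := by
        rw [Multiset.filter_eq_nil]
        intro a ha
        obtain ⟨x, hx, rfl⟩ := Multiset.mem_map.mp ha
        have := Multiset.mem_filter.mp hx
        omega
      rw [e1, e2, add_zero]
    have hK1back : K1 = F.map (fun x => x + 1) := by
      rw [hFval, Multiset.map_map]
      symm
      calc K1.map ((fun x => x + 1) ∘ fun x => x - 1) = K1.map id :=
            Multiset.map_congr rfl (fun x hx => by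
              have := (Multiset.mem_filter.mp hx).2
              simp only [Function.comp_apply, id_eq]
              omega)
        _ = K1 := Multiset.map_id K1
    have hcardF : Multiset.card F = L - 1 := by
      rw [hFeq, Multiset.card_map, hcard_erase j' hj'mem]
    have hcardK1 : Multiset.card K1 = L - 1 := by
      rw [hK1back, Multiset.card_map, hcardF]
    have hcardK2 : Multiset.card K2 = m - (L - 1) := by
      have := congrArg Multiset.card hKsplit
      rw [Multiset.card_add, hcardK1] at this
      omega
    have hLm : L - 1 ≤ m := by
      have := congrArg Multiset.card hKsplit
      rw [Multiset.card_add, hcardK1] at this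
      omega
    refine ⟨j', ⟨(Finset.mem_Icc.mp hj'mem).1, (Finset.mem_Icc.mp hj'mem).2, ?_⟩, ?_⟩
    · rw [hj']; exact hLm
    · unfold Rmove
      rw [hKsplit, hK2rep, hcardK2, hK1back, hFeq, Multiset.map_map, hj']
      congr 1
end
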